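/- There exists a constant c₁₁ depending only on d and κ such that whenever L₀ ≥ c₁₁, the chosen scales satisfy, for all k ≥ 0, L_{k+1}^{3d−1} · κ^{u_{k+1} L_{k+1}/3} ≤ 1. -/

import Mathlib

noncomputable section

open Real Filter

/-- `fseq 0 x = 1`, `fseq 1 x = 8 ^ x`, and `fseq (k+1) = fseq k ∘ fseq 1` for `k ≥ 1`. -/
noncomputable def fseq : ℕ → ℝ → ℝ
  | 0, _ => 1
  | 1, x => (8 : ℝ) ^ x
  | (k+2), x => fseq (k+1) ((8 : ℝ) ^ x)

/-- `u₀ = 3(d-1)/(L₀ log(1/κ))`. -/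
noncomputable def u0 (d : ℕ) (L₀ κ : ℝ) : ℝ := 3 * ((d : ℝ) - 1) / (L₀ * Real.log (1 / κ))

/-- `u_k = u₀ v^{-k}` with `v = 8`. -/
noncomputable def useq (d : ℕ) (L₀ κ : ℝ) (k : ℕ) : ℝ := u0 d L₀ κ / 8 ^ k

/-- The chosen scales `N_k = (α c₁/u₀) f_{[(k+2)/2]}([(k+1)/2]) / f_{[(k+1)/2]}([k/2])`,
with `α = 240`. -/
noncomputable def Nscale (c₁ u₀ : ℝ) (k : ℕ) : ℝ :=
  (240 * c₁ / u₀) * fseq ((k+2)/2) (((k+1)/2 : ℕ) : ℝ) / fseq ((k+1)/2) ((k/2 : ℕ) : ℝ)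

/-- The chosen scales `L_k = f_{[(k+1)/2]}([k/2]) (α c₁/u₀)^k L₀`. -/
noncomputable def Lscale (c₁ u₀ L₀ : ℝ) (k : ℕ) : ℝ :=
  fseq ((k+1)/2) ((k/2 : ℕ) : ℝ) * (240 * c₁ / u₀) ^ k * L₀

/-- The transversal scales `L̃_0 = L̃₀`, `L̃_{k+1} = N_k³ L̃_k`. -/
noncomputable def Ltscale (c₁ u₀ Lt₀ : ℝ) : ℕ → ℝ
  | 0 => Lt₀
  | (k+1) => (Nscale c₁ u₀ k) ^ 3 * Ltscale c₁ u₀ Lt₀ k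

/-! With `R = scaleRate d κ · L₀` one has `L_{k+1} = G (8R)^{k+1} L₀` for a tower factor `G ≥ 1`,
and `log(1/κ) · u_{k+1} L_{k+1} / 3 = (d - 1) G R^{k+1}`. After taking logarithms the claim reads
`(3d - 1) log L_{k+1} ≤ (d - 1) G R^{k+1}`. The tower factor enters the left side only through
`log G ≤ G - 1`, and what remains is `(k + 2) log R = o(R^{k+1})`, uniformly in `k` since
`R^{k+1} ≥ (k + 2) R / 2` once `R ≥ 2`. -/

lemma one_le_fseq : ∀ (m : ℕ) (x : ℝ), 0 ≤ x → 1 ≤ fseq m x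
  | 0, _, _ => le_rfl
  | 1, x, hx => one_le_rpow (by norm_num) hx
  | (k+2), x, _ => one_le_fseq (k+1) _ (rpow_nonneg (by norm_num) x)

lemma pow_mul_rpow_le_one {L κ E : ℝ} (hL : 0 < L) (hκ : 0 < κ) {m : ℕ}
    (h : m * log L + E * log κ ≤ 0) : L ^ m * κ ^ E ≤ 1 := by
  rw [← exp_log hL, ← exp_nat_mul, rpow_def_of_pos hκ, ← exp_add, exp_le_one_iff]
  linarith [mul_comm E (log κ)]

lemma mul_log_mul_le_mul {G y m a : ℝ} (hG : 1 ≤ G) (hy : 0 < y) (hm : 0 ≤ m) (hma : m ≤ a)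
    (h : m * log y ≤ a) : m * log (G * y) ≤ G * a := by
  have hlogG : log G ≤ G - 1 := log_le_sub_one_of_pos (by linarith)
  rw [log_mul (by positivity) hy.ne']
  nlinarith

lemma eventually_mul_log_add_le (a C : ℝ) : ∀ᶠ x in atTop, a * log x + C ≤ x := by
  have h := ((isLittleO_log_id_atTop.const_mul_left a).add
    (Asymptotics.isLittleO_const_id_atTop C)).eventuallyLE
  filter_upwards [h, eventually_ge_atTop 0] with x hx hx0
  simpa [abs_of_nonneg hx0] using (le_abs_self _).trans hx

lemma succ_mul_le_two_mul_pow {R : ℝ} (hR : 2 ≤ R) {n : ℕ} (hn : 1 ≤ n) :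
    (n + 1) * R ≤ 2 * R ^ n := by
  have hbernoulli : 1 + n * (R - 1) ≤ R ^ n := by
    simpa using one_add_mul_le_pow (a := R - 1) (by linarith) n
  have hn' : (1 : ℝ) ≤ n := by exact_mod_cast hn
  nlinarith

lemma eventually_mul_log_pow_mul_le (m b c : ℝ) (hm : 0 ≤ m) (hb : 0 < b) (hc : 0 < c) :
    ∀ᶠ L in atTop, ∀ n ≥ 1, m ≤ (c * L) ^ n ∧ m * log ((b * (c * L)) ^ n * L) ≤ (c * L) ^ n := by
  set K := m * (|log b| + |log c| + 1) with hK
  have hscale := tendsto_id.const_mul_atTop hc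
  filter_upwards [hscale.eventually (eventually_ge_atTop 2),
    hscale.eventually (eventually_mul_log_add_le (2 * m) (2 * K))] with L hR hlog n hn
  simp only [id] at hR hlog
  set R := c * L
  have hL : 0 < L := pos_of_mul_pos_right (by linarith) hc.le
  have hlogR : 0 ≤ log R := log_nonneg (by linarith)
  have hRn := succ_mul_le_two_mul_pow hR hn
  have hn0 : (0 : ℝ) ≤ n := n.cast_nonneg
  have hmK : m ≤ K :=
    le_mul_of_one_le_right hm (by linarith [abs_nonneg (log b), abs_nonneg (log c)])
  refine ⟨?_, ?_⟩
  · linarith [le_self_pow₀ (by linarith : 1 ≤ R) (by omega : n ≠ 0), mul_nonneg hm hlogR]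
  · have hlogL : log L = log R - log c := by rw [log_mul hc.ne' hL.ne']; ring
    rw [log_mul (by positivity) hL.ne', log_pow, log_mul hb.ne' (by positivity), hlogL]
    have hb' : m * n * log b ≤ m * n * |log b| :=
      mul_le_mul_of_nonneg_left (le_abs_self _) (by positivity)
    have hc' : -(m * log c) ≤ m * |log c| := by
      rw [← mul_neg]; exact mul_le_mul_of_nonneg_left (neg_le_abs _) hm
    calc m * (n * (log b + log R) + (log R - log c))
        ≤ (n + 1) * (m * log R + K) := by
          rw [hK]
          nlinarith [mul_nonneg (mul_nonneg hm hn0) (abs_nonneg (log c)),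
            mul_nonneg hm (abs_nonneg (log b)), mul_nonneg hm hn0]
      _ ≤ (n + 1) * (R / 2) := mul_le_mul_of_nonneg_left (by linarith) (by positivity)
      _ ≤ R ^ n := by linarith

def scaleRate (d : ℕ) (κ : ℝ) : ℝ := 10 * √d * log (1 / κ) / (d - 1)

lemma Lscale_sqrt_u0_eq {d : ℕ} {κ L₀ : ℝ} (hd : (d : ℝ) - 1 ≠ 0) (hκ : log (1 / κ) ≠ 0)
    (hL₀ : L₀ ≠ 0) (k : ℕ) : Lscale (√d) (u0 d L₀ κ) L₀ k =
    fseq ((k + 1) / 2) ((k / 2 : ℕ) : ℝ) * (8 * (scaleRate d κ * L₀)) ^ k * L₀ := by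
  rw [Lscale, u0, scaleRate]
  congr 3
  field_simp
  ring

lemma useq_mul_Lscale_sqrt_u0 {d : ℕ} {κ L₀ : ℝ} (hd : (d : ℝ) - 1 ≠ 0) (hκ : log (1 / κ) ≠ 0)
    (hL₀ : L₀ ≠ 0) (k : ℕ) :
    useq d L₀ κ k * Lscale (√d) (u0 d L₀ κ) L₀ k / 3 * log (1 / κ) =
      (d - 1) * (fseq ((k + 1) / 2) ((k / 2 : ℕ) : ℝ) * (scaleRate d κ * L₀) ^ k) := by
  rw [Lscale_sqrt_u0_eq hd hκ hL₀, useq, u0, mul_pow]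
  field_simp

/-- There is a constant `c₁₁ = c₁₁(d,κ)` such that for `L₀ ≥ c₁₁` the chosen scales satisfy
`L_{k+1}^{3d-1} κ^{u_{k+1} L_{k+1}/3} ≤ 1` for all `k ≥ 0`. -/
theorem Lscale_kappa_bound (d : ℕ) (hd : 2 ≤ d) (κ : ℝ) (hκ0 : 0 < κ) (hκ1 : κ < 1) :
    ∃ c₁₁ : ℝ, ∀ L₀ : ℝ, c₁₁ ≤ L₀ → ∀ k : ℕ,
      (Lscale (Real.sqrt d) (u0 d L₀ κ) L₀ (k + 1)) ^ (3 * d - 1) *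
          κ ^ (useq d L₀ κ (k + 1) * Lscale (Real.sqrt d) (u0 d L₀ κ) L₀ (k + 1) / 3) ≤ 1 := by
  have hd1 : (0 : ℝ) < d - 1 := by
    have : (2 : ℝ) ≤ d := by exact_mod_cast hd
    linarith
  have hκ : 0 < log (1 / κ) := log_pos (one_lt_one_div hκ0 hκ1)
  have hc : 0 < scaleRate d κ := by unfold scaleRate; positivity
  set m : ℝ := ((3 * d - 1 : ℕ) : ℝ) / (d - 1)
  have hm : 0 ≤ m := div_nonneg (Nat.cast_nonneg _) hd1.le
  obtain ⟨A, hA⟩ := eventually_atTop.1 <|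
    (eventually_mul_log_pow_mul_le m 8 _ hm (by norm_num) hc).and (eventually_gt_atTop 0)
  refine ⟨A, fun L₀ hL₀ k => ?_⟩
  obtain ⟨hgrowth, hL₀⟩ := hA L₀ hL₀
  obtain ⟨hmR, hlogR⟩ := hgrowth (k + 1) (by omega)
  have hL := Lscale_sqrt_u0_eq hd1.ne' hκ.ne' hL₀.ne' (k + 1)
  have hG := one_le_fseq ((k + 1 + 1) / 2) ((k + 1) / 2 : ℕ) (Nat.cast_nonneg _)
  have hlogL := mul_log_mul_le_mul hG (by positivity) hm hmR hlogR
  rw [← mul_assoc, ← hL] at hlogL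
  have hexponent := useq_mul_Lscale_sqrt_u0 hd1.ne' hκ.ne' hL₀.ne' (k + 1)
  apply pow_mul_rpow_le_one (by rw [hL]; positivity) hκ0
  rw [← mul_div_cancel₀ ((3 * d - 1 : ℕ) : ℝ) hd1.ne', show log κ = -log (1 / κ) by simp]
  linarith [mul_le_mul_of_nonneg_left hlogL hd1.le]
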